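/- Let M be an n×n complex matrix whose rows all sum to the same value α·σ·√n with |α| > 0 and where Y = M satisfies Y·φ = ασ√n·φ for φ = (1,...,1)ᵀ. Fix k and let B be the matrix obtained from Y by replacing the k-th row with zero. Then any unit vector ζ with B·ζ̄ = 0 satisfies dist(ζ, span{φ}) ≥ |α|σ√n / (2 s₁(Y)), provided n ≥ 2, where s₁(Y) is the largest singular value of Y. -/

import Mathlib

/-- Euclidean norm of a complex vector. -/
noncomputable def cenorm {ι : Type*} [Fintype ι] (v : ι → ℂ) : ℝ :=
  Real.sqrt (∑ i, ‖v i‖ ^ 2)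

/-- Largest singular value (operator norm) of a complex matrix. -/
noncomputable def sone {ι κ : Type*} [Fintype ι] [Fintype κ] (B : Matrix ι κ ℂ) : ℝ :=
  sSup {r | ∃ x : κ → ℂ, cenorm x = 1 ∧ r = cenorm (B.mulVec x)}

/-- Euclidean distance from a vector to a subspace. -/
noncomputable def distE {ι : Type*} [Fintype ι] (v : ι → ℂ)
    (H : Submodule ℂ (ι → ℂ)) : ℝ :=
  sInf {r | ∃ h ∈ H, r = cenorm (v - h)}

/-!
Split `ζ = w + λφ` with `λ` the mean of `ζ`, so that `w ⊥ φ`, `‖w‖² + n|λ|² = 1` and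
`dist(ζ, span{φ}) ≥ ‖w‖`. Since `Yφ = μφ` with `μ = ασ√n`, the vector `Y w̄ = Y ζ̄ - λ̄ μ φ`
has every entry except the `k`-th equal to `-λ̄μ`, whence `(n - 1)|λμ|² ≤ ‖Y w̄‖² ≤ s₁(Y)²‖w‖²`.
Together with `|μ| ≤ s₁(Y)` and `n ≤ 2(n - 1)`, this forces `‖w‖ ≥ |μ| / (2 s₁(Y))`.
-/

open Matrix
open scoped Matrix.Norms.L2Operator

section
variable {ι κ : Type*} [Fintype ι] [Fintype κ]

lemma cenorm_nonneg (v : ι → ℂ) : 0 ≤ cenorm v :=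
  Real.sqrt_nonneg _

lemma cenorm_sq (v : ι → ℂ) : cenorm v ^ 2 = ∑ i, ‖v i‖ ^ 2 :=
  Real.sq_sqrt (Finset.sum_nonneg fun _ _ => sq_nonneg _)

lemma cenorm_eq_norm_toLp (v : ι → ℂ) :
    cenorm v = ‖(WithLp.toLp 2 v : EuclideanSpace ℂ ι)‖ := by
  rw [EuclideanSpace.norm_eq]; rfl

lemma cenorm_smul (c : ℂ) (v : ι → ℂ) : cenorm (c • v) = ‖c‖ * cenorm v := by
  simp only [cenorm_eq_norm_toLp, WithLp.toLp_smul, norm_smul]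

lemma cenorm_star (v : ι → ℂ) : cenorm (star v) = cenorm v := by
  simp [cenorm]

lemma sone_eq_l2_opNorm [DecidableEq κ] (A : Matrix ι κ ℂ) : sone A = ‖A‖ := by
  rw [l2_opNorm_def, ← ContinuousLinearMap.sSup_sphere_eq_norm]
  unfold sone
  congr 1
  ext r
  simp only [Set.mem_ofPred_eq, Set.mem_image, mem_sphere_zero_iff_norm]
  constructor
  · rintro ⟨x, hx, rfl⟩
    refine ⟨WithLp.toLp 2 x, by rwa [← cenorm_eq_norm_toLp], ?_⟩
    rw [cenorm_eq_norm_toLp]; rfl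
  · rintro ⟨x, hx, rfl⟩
    refine ⟨x.ofLp, by rwa [cenorm_eq_norm_toLp], ?_⟩
    rw [cenorm_eq_norm_toLp]; rfl

lemma cenorm_mulVec_le (A : Matrix ι κ ℂ) (x : κ → ℂ) :
    cenorm (A *ᵥ x) ≤ sone A * cenorm x := by
  classical
  simpa [sone_eq_l2_opNorm, cenorm_eq_norm_toLp] using A.l2_opNorm_mulVec (WithLp.toLp 2 x)

lemma cenorm_pos {v : ι → ℂ} (hv : v ≠ 0) : 0 < cenorm v := by
  rw [cenorm_eq_norm_toLp, norm_pos_iff]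
  exact fun h => hv (congrArg WithLp.ofLp h)

lemma norm_le_sone_of_mulVec_eq_smul {A : Matrix ι ι ℂ} {μ : ℂ} {x : ι → ℂ}
    (hx : x ≠ 0) (hAx : A *ᵥ x = μ • x) : ‖μ‖ ≤ sone A := by
  have h := cenorm_mulVec_le A x
  rw [hAx, cenorm_smul] at h
  exact le_of_mul_le_mul_right h (cenorm_pos hx)

lemma card_sub_one_mul_sq_le_cenorm_sq {u : ι → ℂ} {z : ℂ} (k : ι) (hu : ∀ i ≠ k, u i = z) :
    ((Fintype.card ι : ℝ) - 1) * ‖z‖ ^ 2 ≤ cenorm u ^ 2 := by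
  classical
  calc ((Fintype.card ι : ℝ) - 1) * ‖z‖ ^ 2
      = ∑ i ∈ Finset.univ.erase k, ‖u i‖ ^ 2 := by
        rw [Finset.sum_congr rfl fun i hi => by rw [hu i (Finset.ne_of_mem_erase hi)],
          Finset.sum_const, Finset.card_erase_of_mem (Finset.mem_univ k), Finset.card_univ,
          nsmul_eq_mul, Nat.cast_pred (Fintype.card_pos_iff.mpr ⟨k⟩)]
    _ ≤ ∑ i, ‖u i‖ ^ 2 :=
        Finset.sum_le_sum_of_subset_of_nonneg (Finset.erase_subset k _) fun _ _ _ => sq_nonneg _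
    _ = cenorm u ^ 2 := (cenorm_sq u).symm

lemma cenorm_add_smul_one_sq {w : ι → ℂ} (hw : ∑ i, w i = 0) (c : ℂ) :
    cenorm (w + c • 1) ^ 2 = cenorm w ^ 2 + Fintype.card ι * ‖c‖ ^ 2 := by
  have cross : ∑ i, (w i * starRingEnd ℂ c).re = 0 := by
    rw [← Complex.re_sum, ← Finset.sum_mul, hw, zero_mul, Complex.zero_re]
  simp only [cenorm_sq, Pi.add_apply, Pi.smul_apply, Pi.one_apply, smul_eq_mul, mul_one,
    Complex.sq_norm, Complex.normSq_add, Finset.sum_add_distrib]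
  rw [← Finset.mul_sum, cross]
  simp

/-- `mean v • 1` is the orthogonal projection of `v` onto the constant vectors. -/
noncomputable def mean (v : ι → ℂ) : ℂ := (∑ i, v i) / Fintype.card ι

lemma sum_sub_mean_smul_one_eq_zero (v : ι → ℂ) : ∑ i, (v - mean v • 1) i = 0 := by
  rcases isEmpty_or_nonempty ι with hι | hι
  · simp
  · simp [Finset.sum_sub_distrib, mean]
    field_simp
    ring

lemma cenorm_sub_mean_smul_one_le_distE (v : ι → ℂ) :
    cenorm (v - mean v • 1) ≤ distE v (Submodule.span ℂ {1}) := by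
  refine le_csInf ⟨_, 0, Submodule.zero_mem _, rfl⟩ ?_
  rintro _ ⟨_, hh, rfl⟩
  obtain ⟨c, rfl⟩ := Submodule.mem_span_singleton.mp hh
  have hsplit : v - c • 1 = (v - mean v • 1) + (mean v - c) • 1 := by
    rw [sub_smul]; abel
  rw [← pow_le_pow_iff_left₀ (cenorm_nonneg _) (cenorm_nonneg _) two_ne_zero, hsplit,
    cenorm_add_smul_one_sq (sum_sub_mean_smul_one_eq_zero v)]
  have : (0 : ℝ) ≤ Fintype.card ι * ‖mean v - c‖ ^ 2 := by positivity
  linarith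

end

lemma div_two_mul_le_of_card_sub_one_mul_sq_le {N a m s d : ℝ} (hN : 2 ≤ N) (hs : 0 < s)
    (hms : m ≤ s) (hd : 0 ≤ d) (hpyth : d ^ 2 + N * a ^ 2 = 1)
    (h : (N - 1) * (a * m) ^ 2 ≤ (s * d) ^ 2) : m / (2 * s) ≤ d := by
  have key : m ^ 2 * (1 - d ^ 2) ≤ 2 * (s * d) ^ 2 := by
    calc m ^ 2 * (1 - d ^ 2) = N * (a * m) ^ 2 := by rw [← hpyth]; ring
      _ ≤ 2 * ((N - 1) * (a * m) ^ 2) := by nlinarith [sq_nonneg (a * m)]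
      _ ≤ 2 * (s * d) ^ 2 := by gcongr
  rw [div_le_iff₀ (by positivity)]
  rcases le_or_gt (1 / 2) d with hd' | hd'
  · nlinarith
  · have : m ^ 2 ≤ (d * (2 * s)) ^ 2 := by
      nlinarith [mul_nonneg (sq_nonneg m) (by nlinarith : (0 : ℝ) ≤ 1 / 4 - d ^ 2)]
    exact le_of_sq_le_sq this (by positivity)

/-- If `Y φ = ασ√n φ` for the all-ones vector `φ`, `B` is `Y` with the `k`-th row
zeroed out, and `ζ` is a unit vector with `B ζ̄ = 0`, then
`dist(ζ, span{φ}) ≥ |α| σ √n / (2 s₁(Y))` (for `n ≥ 2`). -/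
theorem dist_nullvector_to_ones {n : ℕ} (hn : 2 ≤ n)
    (Y : Matrix (Fin n) (Fin n) ℂ) (σ : ℝ) (hσ : 0 < σ) (α : ℂ) (hα : α ≠ 0)
    (hY : Y.mulVec (fun _ => 1) = (α * (σ : ℂ) * (Real.sqrt n : ℂ)) • fun _ => (1 : ℂ))
    (k : Fin n) (ζ : Fin n → ℂ) (hζ : cenorm ζ = 1)
    (hB : (Matrix.of fun i j => if i = k then 0 else Y i j).mulVec
        (fun i => starRingEnd ℂ (ζ i)) = 0) :
    ‖α‖ * σ * Real.sqrt n / (2 * sone Y)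
      ≤ distE ζ (Submodule.span ℂ {fun _ => (1 : ℂ)}) := by
  set μ : ℂ := α * σ * Real.sqrt n
  replace hY : Y *ᵥ 1 = μ • 1 := hY
  have hμ : ‖μ‖ = ‖α‖ * σ * Real.sqrt n := by simp [μ, abs_of_pos hσ, Real.sqrt_nonneg]
  have : NeZero n := ⟨by omega⟩
  have hμ0 : μ ≠ 0 := by simp [μ, hα, hσ.ne', NeZero.ne n]
  have hμs : ‖μ‖ ≤ sone Y := norm_le_sone_of_mulVec_eq_smul one_ne_zero hY
  set w := ζ - mean ζ • 1
  have hpyth : cenorm w ^ 2 + n * ‖mean ζ‖ ^ 2 = 1 := by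
    have h := cenorm_add_smul_one_sq (sum_sub_mean_smul_one_eq_zero ζ) (mean ζ)
    rwa [sub_add_cancel, hζ, one_pow, Fintype.card_fin, eq_comm] at h
  have hrows : ∀ i ≠ k, (Y *ᵥ star w) i = -(starRingEnd ℂ (mean ζ) * μ) := by
    intro i hik
    have hi : (Y *ᵥ star ζ) i = 0 := by
      simpa [Matrix.mulVec, dotProduct, hik] using congrFun hB i
    simp [w, Matrix.mulVec_sub, Matrix.mulVec_smul, hY, hi]
  have hlow := card_sub_one_mul_sq_le_cenorm_sq k hrows
  rw [Fintype.card_fin, norm_neg, norm_mul, RCLike.norm_conj] at hlow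
  have hup : cenorm (Y *ᵥ star w) ≤ sone Y * cenorm w := by
    simpa [cenorm_star] using cenorm_mulVec_le Y (star w)
  rw [← hμ]
  refine (div_two_mul_le_of_card_sub_one_mul_sq_le (by exact_mod_cast hn)
    ((norm_pos_iff.mpr hμ0).trans_le hμs) hμs (cenorm_nonneg w) hpyth ?_).trans
    (cenorm_sub_mean_smul_one_le_distE ζ)
  exact hlow.trans (pow_le_pow_left₀ (cenorm_nonneg _) hup 2)
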